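/- The function q(c_1, ..., c_K) = Σ_{k=1}^K ((2^{2c_k} - 1)/h_k^2) · Π_{j=1}^{k-1} 2^{2c_j} is convex on ℝ^K (as a function of (c_1, ..., c_K)) for any fixed positive gains h_1, ..., h_K. -/

import Mathlib

open Finset

/-- The power function `q(c) = Σ_k ((2^{2c_k}-1)/h_k^2)·Π_{j<k} 2^{2c_j}`. -/
noncomputable def qPow (K : ℕ) (h : Fin K → ℝ) (c : Fin K → ℝ) : ℝ :=
  ∑ k : Fin K, (((2:ℝ) ^ (2 * c k) - 1) / (h k) ^ 2) *
    ∏ j ∈ Finset.univ.filter (fun j : Fin K => j < k), (2:ℝ) ^ (2 * c j)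

/-!
Writing `P_k(c) = Π_{j<k} 2^{2c_j}` and `a_k = 1/h_k^2`, the `k`-th summand of `q` is
`a_k (P_{k+1} - P_k)`. Summation by parts turns `q` into `Σ_k (a_k - a_{k+1}) P_{k+1} - a_0`
(with `a_K = 0`), a combination of the convex functions `P_k = exp (2 log 2 · Σ_{j<k} c_j)` with
coefficients that are nonnegative because `a` is antitone.
-/

section Convexity

variable {E : Type*} [AddCommGroup E] [Module ℝ E] {s : Set E}

theorem ConvexOn.sum {ι : Type*} {t : Finset ι} {f : ι → E → ℝ} (hs : Convex ℝ s)
    (hf : ∀ i ∈ t, ConvexOn ℝ s (f i)) : ConvexOn ℝ s (fun x => ∑ i ∈ t, f i x) := by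
  classical
  induction t using Finset.induction_on with
  | empty => simpa using convexOn_const (0 : ℝ) hs
  | insert i t hi ih =>
    simp only [sum_insert hi]
    exact (hf i (mem_insert_self i t)).add (ih fun j hj => hf j (mem_insert_of_mem hj))

theorem sum_range_mul_sub_eq {R : Type*} [CommRing R] (a F : ℕ → R) (n : ℕ) :
    ∑ k ∈ range n, a k * (F (k + 1) - F k) =
      ∑ k ∈ range n, (a k - a (k + 1)) * F (k + 1) + a n * F n - a 0 * F 0 := by
  induction n with
  | zero => simp
  | succ n ih => rw [sum_range_succ, sum_range_succ, ih]; ring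

theorem convexOn_sum_range_mul_sub {a : ℕ → ℝ} {F : ℕ → E → ℝ} {n : ℕ} (hs : Convex ℝ s)
    (ha : Antitone a) (han : 0 ≤ a n) (hF : ∀ k, ConvexOn ℝ s (F k))
    (hF₀ : ConcaveOn ℝ s (F 0)) :
    ConvexOn ℝ s (fun x => ∑ k ∈ range n, a k * (F (k + 1) x - F k x)) := by
  have hsplit : (fun x => ∑ k ∈ range n, a k * (F (k + 1) x - F k x)) = fun x =>
      ∑ k ∈ range n, (a k - a (k + 1)) * F (k + 1) x + a n * F n x - a 0 * F 0 x :=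
    funext fun x => sum_range_mul_sub_eq a (F · x) n
  rw [hsplit]
  have hsum : ConvexOn ℝ s (fun x => ∑ k ∈ range n, (a k - a (k + 1)) * F (k + 1) x) :=
    .sum hs fun k _ => (hF (k + 1)).smul (sub_nonneg.2 (ha k.le_succ))
  exact (hsum.add ((hF n).smul han)).sub (hF₀.smul (han.trans (ha n.zero_le)))

end Convexity

theorem convexOn_prod_rpow_mul {ι : Type*} {b : ℝ} (hb : 0 < b) (w : ι → ℝ) (t : Finset ι) :
    ConvexOn ℝ Set.univ (fun c : ι → ℝ => ∏ j ∈ t, b ^ (w j * c j)) := by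
  let ℓ : (ι → ℝ) →ₗ[ℝ] ℝ := ∑ j ∈ t, w j • LinearMap.proj j
  have hℓ : ∀ c, ∏ j ∈ t, b ^ (w j * c j) = b ^ ℓ c := fun c => by
    simp [ℓ, Real.rpow_sum_of_pos hb]
  have hconv := (convexOn_rpow_left hb).comp_linearMap ℓ
  rw [Set.preimage_univ] at hconv
  simpa only [hℓ, Function.comp_def] using hconv

namespace qPow

variable {K : ℕ}

noncomputable def prefixProd (K : ℕ) (k : ℕ) (c : Fin K → ℝ) : ℝ :=
  ∏ j ∈ univ.filter (fun j : Fin K => (j : ℕ) < k), (2 : ℝ) ^ (2 * c j)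

noncomputable def invSqGain (h : Fin K → ℝ) (k : ℕ) : ℝ :=
  if hk : k < K then 1 / h ⟨k, hk⟩ ^ 2 else 0

theorem prefixProd_zero : prefixProd K 0 = fun _ => 1 := by
  funext c
  simp [prefixProd]

theorem prefixProd_succ (k : Fin K) (c : Fin K → ℝ) :
    prefixProd K (k + 1) c = (2 : ℝ) ^ (2 * c k) * prefixProd K k c := by
  have hfilter : univ.filter (fun j : Fin K => (j : ℕ) < k + 1) =
      insert k (univ.filter (fun j : Fin K => (j : ℕ) < k)) := by
    ext j
    simp only [mem_filter, mem_univ, true_and, mem_insert, Fin.ext_iff]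
    omega
  rw [prefixProd, hfilter, prod_insert (by simp)]
  rfl

theorem eq_sum_range (h : Fin K → ℝ) (c : Fin K → ℝ) :
    qPow K h c = ∑ k ∈ range K, invSqGain h k * (prefixProd K (k + 1) c - prefixProd K k c) := by
  rw [← Fin.sum_univ_eq_sum_range (fun k => invSqGain h k * _), qPow]
  refine sum_congr rfl fun k _ => ?_
  have hk : prefixProd K k c =
      ∏ j ∈ univ.filter (fun j : Fin K => j < k), (2 : ℝ) ^ (2 * c j) := by
    simp only [prefixProd, Fin.lt_def]
  rw [prefixProd_succ, ← hk, invSqGain, dif_pos k.isLt]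
  ring

theorem invSqGain_antitone {h : Fin K → ℝ} (hh : ∀ k, 0 < h k)
    (hmono : ∀ j k : Fin K, j ≤ k → h j ^ 2 ≤ h k ^ 2) : Antitone (invSqGain h) := by
  intro j k hjk
  unfold invSqGain
  split_ifs with hk hj
  · exact one_div_le_one_div_of_le (pow_pos (hh _) 2) (hmono _ _ hjk)
  · omega
  · positivity
  · rfl

theorem convexOn_prefixProd (k : ℕ) : ConvexOn ℝ Set.univ (prefixProd K k) :=
  convexOn_prod_rpow_mul two_pos (fun _ => 2) _

end qPow

theorem stmt2_general (K : ℕ) (h : Fin K → ℝ)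
    (hh : ∀ k, 0 < h k)
    (hmono : ∀ j k : Fin K, j ≤ k → (h j) ^ 2 ≤ (h k) ^ 2) :
    ConvexOn ℝ Set.univ (qPow K h) := by
  rw [funext (qPow.eq_sum_range h)]
  refine convexOn_sum_range_mul_sub convex_univ (qPow.invSqGain_antitone hh hmono) ?_
    qPow.convexOn_prefixProd ?_
  · simp [qPow.invSqGain]
  · rw [qPow.prefixProd_zero]
    exact concaveOn_const 1 convex_univ

/-- Convexity of `q` on ℝ^K, for positive gains with `h_1^2 ≤ … ≤ h_K^2`. -/
theorem stmt2 (K : ℕ) (hK : 1 ≤ K) (h : Fin K → ℝ)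
    (hh : ∀ k, 0 < h k)
    (hmono : ∀ j k : Fin K, j ≤ k → (h j) ^ 2 ≤ (h k) ^ 2) :
    ConvexOn ℝ Set.univ (qPow K h) :=
  stmt2_general K h hh hmono
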